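/- Taylor formula for the oriented derivative: let S be balanced, n ∈ ℕ, and φ : U → Y be n-times continuously S-differentiable. Then for all (x,h) ∈ U × S with [x,x+h] ⊆ U_S°, φ(x+h) − φ(x) = Σ_{k=1}^{n} (1/k!) D_S^kφ(x)(h,…,h) + ∫₀¹ ((1−t)^{n−1}/(n−1)!)(D_S^nφ(x+th) − D_S^nφ(x))(h,…,h) dt. -/

import Mathlib

open Filter Topology Set RealInnerProductSpace

/-- `S` is star-convex with center `0`. -/
def StarCvx {X : Type*} [NormedAddCommGroup X] [NormedSpace ℝ X] (S : Set X) : Prop :=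
  ∀ h ∈ S, ∀ t : ℝ, 0 ≤ t → t ≤ 1 → t • h ∈ S

/-- The closure `V` of the linear span of `S`. -/
def spanCl {X : Type*} [NormedAddCommGroup X] [NormedSpace ℝ X] (S : Set X) : Submodule ℝ X :=
  (Submodule.span ℝ S).topologicalClosure

theorem mem_spanCl {X : Type*} [NormedAddCommGroup X] [NormedSpace ℝ X] {S : Set X} {h : X}
    (hS : h ∈ S) : h ∈ spanCl S :=
  Submodule.le_topologicalClosure _ (Submodule.subset_span hS)

/-- The `S`-interior of `U`. -/
def SInterior {X : Type*} [NormedAddCommGroup X] [NormedSpace ℝ X] (S U : Set X) : Set X :=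
  {x ∈ U | ∃ δ > 0, ∀ h ∈ S, ‖h‖ < δ → x + h ∈ U}

/-- `φ` is `S`-differentiable at `x` with `S`-oriented derivative `L ∈ L(V,Y)`:
`φ(x+h) = φ(x) + L(h) + o(‖h‖)` as `h → 0` on `S`. -/
def HasSDerivAt {X Y : Type*} [NormedAddCommGroup X] [NormedSpace ℝ X]
    [NormedAddCommGroup Y] [NormedSpace ℝ Y]
    (S : Set X) (φ : X → Y) (L : spanCl S →L[ℝ] Y) (x : X) : Prop :=
  ∀ ε > 0, ∃ δ > 0, ∀ h, ∀ hS : h ∈ S, ‖h‖ < δ →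
    ‖φ (x + h) - φ x - L ⟨h, mem_spanCl hS⟩‖ ≤ ε * ‖h‖

/-- `φ` is `S`-continuous at `x`: `φ(x+h) → φ(x)` as `h → 0` on `S`. -/
def SContAt {X Y : Type*} [NormedAddCommGroup X] [NormedSpace ℝ X]
    [NormedAddCommGroup Y] [NormedSpace ℝ Y] (S : Set X) (φ : X → Y) (x : X) : Prop :=
  ∀ ε > 0, ∃ δ > 0, ∀ h ∈ S, ‖h‖ < δ → ‖φ (x + h) - φ x‖ ≤ ε

/-!
Restricted to the segment `t ↦ x + t • h`, everything becomes one-dimensional: since `S` is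
balanced and star-shaped, `s • h ∈ S` for `|s| ≤ 1`, so `S`-derivatives and `S`-continuity at
points of the segment give ordinary derivatives and continuity in `t`. Evaluating on the diagonal
`(h, …, h)`, the functions `f k t = D k (x + t • h) (h, …, h)` satisfy `(f k)' = f (k + 1)` with
`f n` continuous, and the formula is the one-variable Taylor formula with integral remainder
(repeated integration by parts against `(1 - t) ^ k / k!`), in which the last Taylor term is moved
into the remainder using `∫₀¹ (1 - t) ^ (n - 1) / (n - 1)! = 1 / n!`.
-/

section TaylorIntegral

open Nat intervalIntegral

variable {E : Type*} [NormedAddCommGroup E] [NormedSpace ℝ E] [CompleteSpace E]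

theorem hasDerivAt_one_sub_pow_div_factorial (n : ℕ) (t : ℝ) :
    HasDerivAt (fun s : ℝ => (1 - s) ^ (n + 1) / (n + 1)!) (-((1 - t) ^ n / n !)) t := by
  refine ((((hasDerivAt_id t).const_sub 1).pow (n + 1)).div_const ((n + 1)! : ℝ)).congr_deriv ?_
  rw [Nat.factorial_succ]
  push_cast
  field_simp
  simp

theorem integral_one_sub_pow_div_factorial (n : ℕ) :
    ∫ t in (0 : ℝ)..1, (1 - t) ^ n / n ! = ((n + 1)! : ℝ)⁻¹ := by
  rw [integral_eq_sub_of_hasDerivAt (f := fun t : ℝ => -((1 - t) ^ (n + 1) / (n + 1)!))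
    (fun t _ => by simpa using (hasDerivAt_one_sub_pow_div_factorial n t).fun_neg)
    (by apply Continuous.intervalIntegrable; fun_prop)]
  simp

theorem integral_one_sub_pow_div_factorial_smul {n : ℕ} {f f' : ℝ → E}
    (hf : ∀ t ∈ Icc (0 : ℝ) 1, HasDerivAt f (f' t) t) (hf' : ContinuousOn f' (Icc 0 1)) :
    ∫ t in (0 : ℝ)..1, ((1 - t) ^ n / n !) • f t =
      ((n + 1)! : ℝ)⁻¹ • f 0 + ∫ t in (0 : ℝ)..1, ((1 - t) ^ (n + 1) / (n + 1)!) • f' t := by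
  rw [← uIcc_of_le zero_le_one] at hf hf'
  have hparts := integral_smul_deriv_eq_deriv_smul_of_hasDerivAt (by fun_prop)
    (fun t ht => (hf t ht).continuousAt.continuousWithinAt)
    (fun t _ => hasDerivAt_one_sub_pow_div_factorial n t)
    (fun t ht => hf t (Ioo_subset_Icc_self (by simpa using ht)))
    (by apply Continuous.intervalIntegrable; fun_prop) hf'.intervalIntegrable
  simp only [neg_smul, integral_neg, sub_self, zero_pow (succ_ne_zero n), zero_div, zero_smul,
    sub_zero, one_pow, one_div] at hparts
  rw [hparts]
  abel

theorem sub_eq_sum_add_integral_of_hasDerivAt {f : ℕ → ℝ → E} {n : ℕ}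
    (hf : ∀ k ≤ n, ∀ t ∈ Icc (0 : ℝ) 1, HasDerivAt (f k) (f (k + 1) t) t)
    (hcont : ContinuousOn (f (n + 1)) (Icc 0 1)) :
    f 0 1 - f 0 0 = ∑ k ∈ Finset.Icc 1 n, (k ! : ℝ)⁻¹ • f k 0
      + ∫ t in (0 : ℝ)..1, ((1 - t) ^ n / n !) • f (n + 1) t := by
  induction n with
  | zero =>
    rw [← uIcc_of_le zero_le_one] at hf hcont
    simp [integral_eq_sub_of_hasDerivAt (hf 0 le_rfl) hcont.intervalIntegrable]
  | succ n ih =>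
    have hcont_succ : ContinuousOn (f (n + 1)) (Icc 0 1) := fun t ht =>
      (hf (n + 1) le_rfl t ht).continuousAt.continuousWithinAt
    rw [ih (fun k hk => hf k (hk.trans n.le_succ)) hcont_succ,
      integral_one_sub_pow_div_factorial_smul (hf (n + 1) le_rfl) hcont,
      Finset.sum_Icc_succ_top (Nat.le_add_left 1 n), ← add_assoc]

theorem sub_eq_sum_add_integral_sub_of_hasDerivAt {f : ℕ → ℝ → E} {n : ℕ} (hn : 1 ≤ n)
    (hf : ∀ k < n, ∀ t ∈ Icc (0 : ℝ) 1, HasDerivAt (f k) (f (k + 1) t) t)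
    (hcont : ContinuousOn (f n) (Icc 0 1)) :
    f 0 1 - f 0 0 = ∑ k ∈ Finset.Icc 1 n, (k ! : ℝ)⁻¹ • f k 0
      + ∫ t in (0 : ℝ)..1, ((1 - t) ^ (n - 1) / (n - 1)!) • (f n t - f n 0) := by
  obtain ⟨m, rfl⟩ : ∃ m, n = m + 1 := ⟨n - 1, by omega⟩
  have hint : IntervalIntegrable (fun t => ((1 - t) ^ m / m !) • f (m + 1) t)
      MeasureTheory.volume 0 1 := by
    rw [← uIcc_of_le zero_le_one] at hcont
    exact (ContinuousOn.smul (by fun_prop) hcont).intervalIntegrable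
  simp_rw [Nat.add_sub_cancel, smul_sub]
  rw [sub_eq_sum_add_integral_of_hasDerivAt (fun k hk => hf k (Nat.lt_succ_of_le hk)) hcont,
    integral_sub hint (by apply Continuous.intervalIntegrable; fun_prop),
    intervalIntegral.integral_smul_const, integral_one_sub_pow_div_factorial,
    Finset.sum_Icc_succ_top (by omega)]
  abel

end TaylorIntegral

section OrientedDerivative

variable {X Y : Type*} [NormedAddCommGroup X] [NormedSpace ℝ X] [NormedAddCommGroup Y]
  [NormedSpace ℝ Y] {S : Set X} {x h : X} {t : ℝ}

theorem StarCvx.smul_mem_of_abs_le_one (hS : StarCvx S) (hbal : ∀ k ∈ S, -k ∈ S) (hh : h ∈ S)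
    {s : ℝ} (hs : |s| ≤ 1) : s • h ∈ S := by
  rcases le_or_gt 0 s with hs0 | hs0
  · exact hS h hh s hs0 (by rwa [abs_of_nonneg hs0] at hs)
  · rw [← neg_smul_neg]
    exact hS (-h) (hbal h hh) (-s) (by linarith) (by rwa [abs_of_neg hs0] at hs)

theorem StarCvx.eventually_sub_smul_mem (hS : StarCvx S) (hbal : ∀ k ∈ S, -k ∈ S) (hh : h ∈ S)
    (t : ℝ) {δ : ℝ} (hδ : 0 < δ) : ∀ᶠ s in 𝓝 t, (s - t) • h ∈ S ∧ ‖(s - t) • h‖ < δ := by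
  have hsmall : Tendsto (fun s : ℝ => (s - t) • h) (𝓝 t) (𝓝 0) := by
    have hcont : Continuous fun s : ℝ => (s - t) • h := by fun_prop
    simpa using hcont.tendsto t
  filter_upwards [Metric.closedBall_mem_nhds t zero_lt_one,
    hsmall.eventually (Metric.ball_mem_nhds 0 hδ)] with s hs hsδ
  exact ⟨hS.smul_mem_of_abs_le_one hbal hh hs, mem_ball_zero_iff.mp hsδ⟩

theorem HasSDerivAt.hasDerivAt_comp_add_smul (hS : StarCvx S) (hbal : ∀ k ∈ S, -k ∈ S)
    (hh : h ∈ S) {f : X → Y} {L : spanCl S →L[ℝ] Y} (hf : HasSDerivAt S f L (x + t • h)) :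
    HasDerivAt (fun s : ℝ => f (x + s • h)) (L ⟨h, mem_spanCl hh⟩) t := by
  rw [hasDerivAt_iff_isLittleO, Asymptotics.isLittleO_iff]
  intro ε hε
  obtain ⟨δ, hδ, hfδ⟩ := hf (ε / (‖h‖ + 1)) (by positivity)
  filter_upwards [hS.eventually_sub_smul_mem hbal hh t hδ] with s ⟨hmem, hlt⟩
  have hpoint : x + t • h + (s - t) • h = x + s • h := by rw [sub_smul]; abel
  have hL : L ⟨(s - t) • h, mem_spanCl hmem⟩ = (s - t) • L ⟨h, mem_spanCl hh⟩ :=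
    L.map_smul (s - t) ⟨h, mem_spanCl hh⟩
  calc ‖f (x + s • h) - f (x + t • h) - (s - t) • L ⟨h, mem_spanCl hh⟩‖
      = ‖f (x + t • h + (s - t) • h) - f (x + t • h) - L ⟨(s - t) • h, mem_spanCl hmem⟩‖ := by
        rw [hpoint, hL]
    _ ≤ ε / (‖h‖ + 1) * ‖(s - t) • h‖ := hfδ _ hmem hlt
    _ = ε * ‖s - t‖ * (‖h‖ / (‖h‖ + 1)) := by rw [norm_smul]; ring
    _ ≤ ε * ‖s - t‖ := by
        refine mul_le_of_le_one_right (by positivity) ?_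
        rw [div_le_one (by positivity)]
        linarith

theorem SContAt.continuousAt_comp_add_smul (hS : StarCvx S) (hbal : ∀ k ∈ S, -k ∈ S)
    (hh : h ∈ S) {f : X → Y} (hf : SContAt S f (x + t • h)) :
    ContinuousAt (fun s : ℝ => f (x + s • h)) t := by
  rw [ContinuousAt, Metric.tendsto_nhds]
  intro ε hε
  obtain ⟨δ, hδ, hfδ⟩ := hf (ε / 2) (half_pos hε)
  filter_upwards [hS.eventually_sub_smul_mem hbal hh t hδ] with s ⟨hmem, hlt⟩
  have hpoint : x + t • h + (s - t) • h = x + s • h := by rw [sub_smul]; abel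
  rw [dist_eq_norm, ← hpoint]
  exact (hfδ _ hmem hlt).trans_lt (half_lt_self hε)

theorem HasSDerivAt.hasDerivAt_apply_diag (hS : StarCvx S) (hbal : ∀ k ∈ S, -k ∈ S) (hh : h ∈ S)
    {k : ℕ} {F : X → ContinuousMultilinearMap ℝ (fun _ : Fin k => spanCl S) Y}
    {G : ContinuousMultilinearMap ℝ (fun _ : Fin (k + 1) => spanCl S) Y}
    (hF : HasSDerivAt S F G.curryLeft (x + t • h)) :
    HasDerivAt (fun s : ℝ => F (x + s • h) fun _ => ⟨h, mem_spanCl hh⟩)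
      (G fun _ => ⟨h, mem_spanCl hh⟩) t := by
  set v : spanCl S := ⟨h, mem_spanCl hh⟩
  have hev := ContinuousMultilinearMap.apply ℝ (fun _ : Fin k => spanCl S) Y (fun _ => v)
    |>.hasFDerivAt.comp_hasDerivAt t (hF.hasDerivAt_comp_add_smul hS hbal hh)
  refine hev.congr_deriv ?_
  rw [ContinuousMultilinearMap.apply_apply, ContinuousMultilinearMap.curryLeft_apply]
  exact congrArg G (Fin.cons_self_tail fun _ => v)

end OrientedDerivative

set_option synthInstance.maxHeartbeats 1000000 in
theorem sDeriv_taylor_formula_general {X Y : Type*} [NormedAddCommGroup X] [NormedSpace ℝ X]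
    [NormedAddCommGroup Y] [NormedSpace ℝ Y] [CompleteSpace Y]
    {S : Set X} (hS : StarCvx S) (hbal : ∀ k ∈ S, -k ∈ S) {U : Set X} {φ : X → Y}
    (n : ℕ) (hn : 1 ≤ n)
    (D : (k : ℕ) → X → ContinuousMultilinearMap ℝ (fun _ : Fin k => spanCl S) Y)
    (hD0 : ∀ z : X, D 0 z 0 = φ z)
    (hDk : ∀ k < n, ∀ z ∈ SInterior S U,
      HasSDerivAt S (fun w => D k w) ((D (k + 1) z).curryLeft) z)
    (hcont : ∀ z ∈ SInterior S U, SContAt S (D n) z)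
    {x h : X} (hh : h ∈ S)
    (hseg : ∀ t : ℝ, 0 ≤ t → t ≤ 1 → x + t • h ∈ SInterior S U) :
    φ (x + h) - φ x =
      ∑ k ∈ Finset.Icc 1 n, ((k.factorial : ℝ)⁻¹ • D k x fun _ => ⟨h, mem_spanCl hh⟩)
        + ∫ t in (0:ℝ)..1, ((1 - t) ^ (n - 1) / (n - 1).factorial : ℝ) •
            ((D n (x + t • h) - D n x) fun _ => ⟨h, mem_spanCl hh⟩) := by
  set v : spanCl S := ⟨h, mem_spanCl hh⟩
  have hD0v (z : X) : D 0 z (fun _ => v) = φ z := by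
    rw [← hD0 z, Subsingleton.elim (fun _ : Fin 0 => v) 0]
  have hderiv : ∀ k < n, ∀ t ∈ Icc (0 : ℝ) 1, HasDerivAt (fun s => D k (x + s • h) fun _ => v)
      (D (k + 1) (x + t • h) fun _ => v) t := fun k hk t ht =>
    (hDk k hk _ (hseg t ht.1 ht.2)).hasDerivAt_apply_diag hS hbal hh
  have hcontn : ContinuousOn (fun s : ℝ => D n (x + s • h) fun _ => v) (Icc 0 1) := fun t ht =>
    ((hcont _ (hseg t ht.1 ht.2)).continuousAt_comp_add_smul hS hbal hh).eval_const _
      |>.continuousWithinAt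
  simpa only [one_smul, zero_smul, add_zero, hD0v, sub_apply] using
    sub_eq_sum_add_integral_sub_of_hasDerivAt hn hderiv hcontn

set_option synthInstance.maxHeartbeats 1000000 in
/-- Taylor's formula for the oriented derivative. The higher-order
`S`-derivatives are given as a family `D k : X → L^k(V, Y)` of continuous multilinear maps,
where `D 0 x = φ x` and `D (k+1) z`, in curried form, is the `S`-derivative of `D k` at `z`. -/
theorem sDeriv_taylor_formula {X Y : Type*} [NormedAddCommGroup X] [NormedSpace ℝ X]
    [CompleteSpace X] [NormedAddCommGroup Y] [NormedSpace ℝ Y] [CompleteSpace Y]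
    {S : Set X} (hS : StarCvx S) (hbal : ∀ k ∈ S, -k ∈ S) {U : Set X} {φ : X → Y}
    (n : ℕ) (hn : 1 ≤ n)
    (D : (k : ℕ) → X → ContinuousMultilinearMap ℝ (fun _ : Fin k => spanCl S) Y)
    (hD0 : ∀ z : X, D 0 z 0 = φ z)
    (hDk : ∀ k < n, ∀ z ∈ SInterior S U,
      HasSDerivAt S (fun w => D k w) ((D (k + 1) z).curryLeft) z)
    (hcont : ∀ z ∈ SInterior S U, SContAt S (D n) z)
    {x h : X} (hxU : x ∈ U) (hh : h ∈ S)
    (hseg : ∀ t : ℝ, 0 ≤ t → t ≤ 1 → x + t • h ∈ SInterior S U) :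
    φ (x + h) - φ x =
      ∑ k ∈ Finset.Icc 1 n, ((k.factorial : ℝ)⁻¹ • D k x fun _ => ⟨h, mem_spanCl hh⟩)
        + ∫ t in (0:ℝ)..1, ((1 - t) ^ (n - 1) / (n - 1).factorial : ℝ) •
            ((D n (x + t • h) - D n x) fun _ => ⟨h, mem_spanCl hh⟩) :=
  sDeriv_taylor_formula_general hS hbal n hn D hD0 hDk hcont hh hseg
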